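/- Let N ≥ 3 and let M ≥ 3 be an integer divisible by (7^{N+1})!. For 1 ≤ k ≤ N, let I_k be the OOEBP instance consisting of, in order, M items of size 1/7^N, then M items of size 1/7^{N−1}, …, then M items of size 1/7^k. Then OPT(I_k) ≤ 7M/(6·(7^k+1)). -/
import Mathlib


open scoped BigOperators Classical

namespace OOEBP

noncomputable section

/-- Load of bin `b` under packing `p` of instance `s`. -/
def binLoad (s : List ℝ) (p : ℕ → ℕ) (b : ℕ) : ℝ :=
  ∑ j ∈ Finset.range s.length, if p j = b then s.getD j 0 else 0

/-- A packing is feasible if each item is placed into a bin whose current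
load (total size of earlier items in the same bin) is strictly below 1. -/
def Feasible (s : List ℝ) (p : ℕ → ℕ) : Prop :=
  ∀ i < s.length,
    (∑ j ∈ Finset.range i, if p j = p i then s.getD j 0 else 0) < 1

/-- The cost of a packing: the number of nonempty bins. -/
def cost (s : List ℝ) (p : ℕ → ℕ) : ℕ :=
  ((Finset.range s.length).image p).card

/-- Optimal cost of a feasible packing of `s`. -/
def OPT (s : List ℝ) : ℕ :=
  sInf {m | ∃ p, Feasible s p ∧ cost s p = m}

/-- Item `i` is the exceeding item of its bin: the bin's total size is at
least 1 and `i` is the item of maximum index in its bin. -/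
def IsExceeding (s : List ℝ) (p : ℕ → ℕ) (i : ℕ) : Prop :=
  i < s.length ∧ 1 ≤ binLoad s p (p i) ∧
    ∀ j, i < j → j < s.length → p j ≠ p i
/-- The instance `I_k`: `M` items of size `1/7^N`, then `M` items of size
`1/7^{N−1}`, …, then `M` items of size `1/7^k`, in this order. -/
def instI (M N k : ℕ) : List ℝ :=
  (List.range (N - k + 1)).flatMap fun j => List.replicate M ((1 : ℝ) / 7 ^ (N - j))

/-! ### Auxiliary construction -/

def binOf (N k β q : ℕ) : ℕ :=
  if β < N - k then (if q < 36 then q / 6 else 6)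
  else (if q < 6 * 7 ^ k then q / 7 ^ k else 6)

def pk (M N k i : ℕ) : ℕ :=
  7 * (i % M / (6 * 7 ^ k + 6)) + binOf N k (i / M) (i % M % (6 * 7 ^ k + 6))

lemma binOf_lt_seven (N k β q : ℕ) : binOf N k β q < 7 := by
  have h7 : 0 < 7 ^ k := pow_pos (by norm_num) k
  unfold binOf
  split_ifs with h1 h2 h3
  · omega
  · omega
  · have : q / 7 ^ k < 6 := Nat.div_lt_of_lt_mul (by omega)
    omega
  · omega

private lemma card_le_of_bounds (S : Finset ℕ) (lo c : ℕ)
    (h : ∀ j ∈ S, lo ≤ j ∧ j < lo + c) : S.card ≤ c := by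
  have hsub : S ⊆ Finset.Ico lo (lo + c) := fun j hj => Finset.mem_Ico.mpr (h j hj)
  have := Finset.card_le_card hsub
  rw [Nat.card_Ico] at this
  omega

private lemma decomp (M m j : ℕ) :
    M * (j / M) + (m * (j % M / m) + j % M % m) = j := by
  rw [Nat.div_add_mod, Nat.div_add_mod]

private lemma div_char (q c b : ℕ) (hc : 0 < c) (h : q / c = b) :
    c * b ≤ q ∧ q < c * b + c := by
  have h1 := Nat.div_add_mod q c
  have h2 := Nat.mod_lt q hc
  rw [h] at h1
  obtain ⟨w, hw⟩ : ∃ w, c * b = w := ⟨_, rfl⟩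
  obtain ⟨r, hr⟩ : ∃ r, q % c = r := ⟨_, rfl⟩
  rw [hw, hr] at h1
  rw [hr] at h2
  rw [hw]
  omega

lemma len_fr (f : ℕ → ℝ) (M : ℕ) :
    ∀ B, ((List.range B).flatMap fun j => List.replicate M (f j)).length = B * M := by
  intro B
  induction B with
  | zero => simp
  | succ B ih =>
    rw [List.range_succ, List.flatMap_append, List.length_append, ih]
    simp [Nat.succ_mul]

lemma getD_fr (f : ℕ → ℝ) (M : ℕ) : ∀ B i, i < B * M →
    (((List.range B).flatMap fun j => List.replicate M (f j)).getD i 0) = f (i / M) := by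
  intro B
  induction B with
  | zero => intro i h; omega
  | succ B ih =>
    intro i h
    have hBM : (B + 1) * M = B * M + M := by ring
    rw [hBM] at h
    rw [List.range_succ, List.flatMap_append]
    by_cases hi : i < B * M
    · rw [List.getD_append _ _ _ _ (by rw [len_fr]; exact hi)]
      exact ih i hi
    · rw [List.getD_append_right _ _ _ _ (by rw [len_fr]; omega)]
      rw [len_fr]
      have hM : 0 < M := by by_contra h'; omega
      have hdiv : i / M = B := Nat.div_eq_of_lt_le (by omega) (by rw [hBM]; omega)
      rw [hdiv]
      simp only [List.flatMap_cons, List.flatMap_nil, List.append_nil]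
      have hr : i - B * M < M := by omega
      simp [List.getD_eq_getElem?_getD, List.getElem?_replicate, hr]

lemma instI_length (M N k : ℕ) : (instI M N k).length = (N - k + 1) * M :=
  len_fr _ _ _

lemma instI_getD (M N k i : ℕ) (h : i < (N - k + 1) * M) :
    (instI M N k).getD i 0 = 1 / 7 ^ (N - i / M) :=
  getD_fr _ _ _ _ h

lemma geom6 : ∀ (K : ℕ) (k : ℕ),
    6 * ∑ β ∈ Finset.range K, (1:ℝ)/7^(K + k - β) = 1/7^k - 1/7^(K+k) := by
  intro K
  induction K with
  | zero => intro k; simp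
  | succ K ih =>
    intro k
    rw [Finset.sum_range_succ]
    have h1 : ∀ β ∈ Finset.range K, (1:ℝ)/7^(K+1+k-β) = 1/7^(K+(k+1)-β) := by
      intro β hβ
      have e : K+1+k-β = K+(k+1)-β := by omega
      rw [e]
    rw [Finset.sum_congr rfl h1]
    have h2 := ih (k+1)
    have e : K + 1 + k - K = k + 1 := by omega
    rw [e]
    rw [mul_add, h2]
    have e2 : K + (k+1) = K + 1 + k := by omega
    rw [e2]
    have h7 : (7:ℝ)^(k+1) = 7 * 7^k := by ring
    rw [h7]
    have hne : (7:ℝ)^k ≠ 0 := by positivity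
    field_simp
    ring

lemma Ssig (N k : ℕ) (hkN : k ≤ N) :
    ∑ β ∈ Finset.range (N - k), (1:ℝ)/7^(N-β) = (1/7^k - 1/7^N)/6 := by
  have h := geom6 (N-k) k
  have e : N - k + k = N := by omega
  rw [e] at h
  linarith

lemma feas (M N k : ℕ) (hk1 : 1 ≤ k) (hkN : k ≤ N) :
    Feasible (instI M N k) (pk M N k) := by
  intro i hi
  rw [instI_length] at hi
  have hM : 0 < M := by
    rcases Nat.eq_zero_or_pos M with h | h
    · rw [h, Nat.mul_zero] at hi; omega
    · exact h
  have h7k0 : 0 < 7 ^ k := pow_pos (by norm_num) k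
  have h7k7 : 7 ≤ 7 ^ k := by
    calc (7:ℕ) = 7 ^ 1 := (pow_one 7).symm
    _ ≤ 7 ^ k := Nat.pow_le_pow_right (by norm_num) hk1
  have hm0 : 0 < 6 * 7 ^ k + 6 := by omega
  set A := (Finset.range i).filter (fun j => pk M N k j = pk M N k i) with hA
  -- structural facts about members of the fibers
  have key : ∀ β : ℕ, ∀ j ∈ A.filter (fun j => j / M = β),
      j < i ∧ j / M = β ∧ j % M / (6*7^k+6) = i % M / (6*7^k+6) ∧
        binOf N k β (j % M % (6*7^k+6)) = binOf N k (i / M) (i % M % (6*7^k+6)) := by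
    intro β j hj
    rw [Finset.mem_filter] at hj
    obtain ⟨hjA, hjβ⟩ := hj
    rw [hA, Finset.mem_filter, Finset.mem_range] at hjA
    obtain ⟨hji, hjp⟩ := hjA
    have h7j : binOf N k β (j % M % (6*7^k+6)) < 7 := binOf_lt_seven _ _ _ _
    have h7i : binOf N k (i / M) (i % M % (6*7^k+6)) < 7 := binOf_lt_seven _ _ _ _
    have e1 : pk M N k j = 7 * (j % M / (6*7^k+6)) + binOf N k β (j % M % (6*7^k+6)) := by
      unfold pk; rw [hjβ]
    have e2 : pk M N k i = 7 * (i % M / (6*7^k+6)) + binOf N k (i / M) (i % M % (6*7^k+6)) := rfl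
    rw [e1, e2] at hjp
    obtain ⟨x, hx⟩ : ∃ x, j % M / (6*7^k+6) = x := ⟨_, rfl⟩
    obtain ⟨y, hy⟩ : ∃ y, binOf N k β (j % M % (6*7^k+6)) = y := ⟨_, rfl⟩
    obtain ⟨x', hx'⟩ : ∃ x, i % M / (6*7^k+6) = x := ⟨_, rfl⟩
    obtain ⟨y', hy'⟩ : ∃ y, binOf N k (i / M) (i % M % (6*7^k+6)) = y := ⟨_, rfl⟩
    rw [hx, hy, hx', hy'] at hjp
    rw [hy] at h7j
    rw [hy'] at h7i
    exact ⟨hji, hjβ, by rw [hx, hx']; omega, by rw [hy, hy']; omega⟩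
  have decompj : ∀ β j, j / M = β → j % M / (6*7^k+6) = i % M / (6*7^k+6) →
      j = M * β + ((6*7^k+6) * (i % M / (6*7^k+6)) + j % M % (6*7^k+6)) := by
    intro β j h1 h2
    have h3 := decomp M (6*7^k+6) j
    rw [h1, h2] at h3
    exact h3.symm
  have decompi : i = M * (i / M) + ((6*7^k+6) * (i % M / (6*7^k+6)) + i % M % (6*7^k+6)) :=
    (decomp M (6*7^k+6) i).symm
  -- card bounds, small blocks
  have bsmall6 : binOf N k (i / M) (i % M % (6*7^k+6)) < 6 → ∀ β, β < N - k →
      (A.filter (fun j => j / M = β)).card ≤ 6 := by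
    intro hb6 β hβ
    apply card_le_of_bounds _ (M * β + ((6*7^k+6) * (i % M / (6*7^k+6)) +
      6 * binOf N k (i / M) (i % M % (6*7^k+6)))) 6
    intro j hj
    obtain ⟨hji, hjβ, hjg, hjb⟩ := key β j hj
    have hdj := decompj β j hjβ hjg
    have hqm : j % M % (6*7^k+6) < 6*7^k+6 := Nat.mod_lt _ hm0
    obtain ⟨bb, hbb⟩ : ∃ x, binOf N k (i / M) (i % M % (6*7^k+6)) = x := ⟨_, rfl⟩
    rw [hbb] at hjb hb6 ⊢
    unfold binOf at hjb
    rw [if_pos hβ] at hjb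
    obtain ⟨q, hq⟩ : ∃ q, j % M % (6*7^k+6) = q := ⟨_, rfl⟩
    obtain ⟨P, hP⟩ : ∃ x, M * β = x := ⟨_, rfl⟩
    obtain ⟨Q, hQ⟩ : ∃ x, (6*7^k+6) * (i % M / (6*7^k+6)) = x := ⟨_, rfl⟩
    rw [hq] at hjb hdj hqm
    rw [hP, hQ] at hdj ⊢
    split_ifs at hjb with h36
    · omega
    · omega
  have bsmallC : ∀ β, β < N - k →
      (A.filter (fun j => j / M = β)).card ≤ 6 * 7^k - 30 := by
    intro β hβ
    rcases lt_or_ge (binOf N k (i / M) (i % M % (6*7^k+6))) 6 with h6 | h6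
    · exact le_trans (bsmall6 h6 β hβ) (by omega)
    · have hbeq : binOf N k (i / M) (i % M % (6*7^k+6)) = 6 := by
        have := binOf_lt_seven N k (i/M) (i % M % (6*7^k+6)); omega
      apply card_le_of_bounds _ (M * β + ((6*7^k+6) * (i % M / (6*7^k+6)) + 36)) (6*7^k - 30)
      intro j hj
      obtain ⟨hji, hjβ, hjg, hjb⟩ := key β j hj
      have hdj := decompj β j hjβ hjg
      have hqm : j % M % (6*7^k+6) < 6*7^k+6 := Nat.mod_lt _ hm0
      rw [hbeq] at hjb
      unfold binOf at hjb
      rw [if_pos hβ] at hjb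
      -- hjb : (if q < 36 then q/6 else 6) = 6
      obtain ⟨q, hq⟩ : ∃ q, j % M % (6*7^k+6) = q := ⟨_, rfl⟩
      obtain ⟨P, hP⟩ : ∃ x, M * β = x := ⟨_, rfl⟩
      obtain ⟨Q, hQ⟩ : ∃ x, (6*7^k+6) * (i % M / (6*7^k+6)) = x := ⟨_, rfl⟩
      rw [hq] at hjb hdj hqm
      rw [hP, hQ] at hdj ⊢
      split_ifs at hjb with h36
      · omega
      · omega
  -- big block
  have bigEmpty : i / M < N - k → (A.filter (fun j => j / M = N - k)).card = 0 := by
    intro hiK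
    rw [Finset.card_eq_zero, Finset.eq_empty_iff_forall_notMem]
    intro j hj
    obtain ⟨hji, hjβ, _, _⟩ := key (N-k) j hj
    have h1 : M * (N - k) ≤ j := by
      rw [← hjβ]; exact Nat.mul_div_le j M
    have h2 : i < (N - k) * M := (Nat.div_lt_iff_lt_mul hM).mp hiK
    rw [mul_comm] at h2
    omega
  have big6 : i / M = N - k → binOf N k (i / M) (i % M % (6*7^k+6)) < 6 →
      (A.filter (fun j => j / M = N - k)).card ≤ 7^k - 1 := by
    intro hiK hb6
    obtain ⟨bb, hbb⟩ : ∃ x, binOf N k (i / M) (i % M % (6*7^k+6)) = x := ⟨_, rfl⟩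
    rw [hbb] at hb6
    have hbi : bb = (if i % M % (6*7^k+6) < 6 * 7^k then i % M % (6*7^k+6) / 7^k else 6) := by
      have h0 : binOf N k (i / M) (i % M % (6*7^k+6))
          = (if i % M % (6*7^k+6) < 6 * 7^k then i % M % (6*7^k+6) / 7^k else 6) := by
        unfold binOf
        rw [hiK, if_neg (lt_irrefl _)]
      rw [hbb] at h0
      exact h0
    apply card_le_of_bounds _ (M * (N-k) + ((6*7^k+6) * (i % M / (6*7^k+6)) + 7^k * bb)) (7^k - 1)
    intro j hj
    obtain ⟨hji, hjβ, hjg, hjb⟩ := key (N-k) j hj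
    rw [hbb] at hjb
    have hdj := decompj (N-k) j hjβ hjg
    have hdi := decompi
    rw [hiK] at hdi
    have hqi : 7^k * bb ≤ i % M % (6*7^k+6) ∧ i % M % (6*7^k+6) < 7^k * bb + 7^k := by
      by_cases hlt : i % M % (6*7^k+6) < 6 * 7^k
      · have h' : i % M % (6*7^k+6) / 7^k = bb := by rw [hbi, if_pos hlt]
        exact div_char _ _ _ h7k0 h'
      · exfalso
        rw [if_neg hlt] at hbi
        omega
    have hqj : 7^k * bb ≤ j % M % (6*7^k+6) := by
      have hjb2 : (if j % M % (6*7^k+6) < 6 * 7^k then j % M % (6*7^k+6) / 7^k else 6) = bb := by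
        have h0 : binOf N k (N - k) (j % M % (6*7^k+6))
            = (if j % M % (6*7^k+6) < 6 * 7^k then j % M % (6*7^k+6) / 7^k else 6) := by
          unfold binOf
          rw [if_neg (lt_irrefl _)]
        rw [← h0]
        exact hjb
      by_cases hlt : j % M % (6*7^k+6) < 6 * 7^k
      · rw [if_pos hlt] at hjb2
        exact (div_char _ _ _ h7k0 hjb2).1
      · exfalso
        rw [if_neg hlt] at hjb2
        omega
    obtain ⟨q, hq⟩ : ∃ q, j % M % (6*7^k+6) = q := ⟨_, rfl⟩
    obtain ⟨qi, hqI⟩ : ∃ q, i % M % (6*7^k+6) = q := ⟨_, rfl⟩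
    obtain ⟨P, hP⟩ : ∃ x, M * (N-k) = x := ⟨_, rfl⟩
    obtain ⟨Q, hQ⟩ : ∃ x, (6*7^k+6) * (i % M / (6*7^k+6)) = x := ⟨_, rfl⟩
    obtain ⟨W, hW⟩ : ∃ x, 7^k * bb = x := ⟨_, rfl⟩
    rw [hq] at hdj hqj
    rw [hqI] at hqi hdi
    rw [hP, hQ] at hdj hdi
    rw [hW] at hqi hqj
    rw [hP, hQ, hW]
    obtain ⟨T, hT⟩ : ∃ x, 7^k = x := ⟨_, rfl⟩
    rw [hT] at hqi ⊢
    rw [hT] at h7k7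
    omega
  have bigC : i / M = N - k → binOf N k (i / M) (i % M % (6*7^k+6)) = 6 →
      (A.filter (fun j => j / M = N - k)).card ≤ 5 := by
    intro hiK hb6
    have hbi : (6:ℕ) = (if i % M % (6*7^k+6) < 6 * 7^k then i % M % (6*7^k+6) / 7^k else 6) := by
      have h0 : binOf N k (i / M) (i % M % (6*7^k+6))
          = (if i % M % (6*7^k+6) < 6 * 7^k then i % M % (6*7^k+6) / 7^k else 6) := by
        unfold binOf
        rw [hiK, if_neg (lt_irrefl _)]
      rw [hb6] at h0
      exact h0
    apply card_le_of_bounds _ (M * (N-k) + ((6*7^k+6) * (i % M / (6*7^k+6)) + 6 * 7^k)) 5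
    intro j hj
    obtain ⟨hji, hjβ, hjg, hjb⟩ := key (N-k) j hj
    rw [hb6] at hjb
    have hdj := decompj (N-k) j hjβ hjg
    have hdi := decompi
    rw [hiK] at hdi
    have hqi : 6 * 7^k ≤ i % M % (6*7^k+6) := by
      by_cases hlt : i % M % (6*7^k+6) < 6 * 7^k
      · rw [if_pos hlt] at hbi
        obtain ⟨h1, h2⟩ := div_char _ _ _ h7k0 hbi.symm
        omega
      · omega
    have hqM : i % M % (6*7^k+6) < 6*7^k+6 := Nat.mod_lt _ hm0
    have hqjM : j % M % (6*7^k+6) < 6*7^k+6 := Nat.mod_lt _ hm0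
    have hqj : 6 * 7^k ≤ j % M % (6*7^k+6) := by
      have hjb2 : (if j % M % (6*7^k+6) < 6 * 7^k then j % M % (6*7^k+6) / 7^k else 6) = 6 := by
        have h0 : binOf N k (N - k) (j % M % (6*7^k+6))
            = (if j % M % (6*7^k+6) < 6 * 7^k then j % M % (6*7^k+6) / 7^k else 6) := by
          unfold binOf
          rw [if_neg (lt_irrefl _)]
        rw [← h0]
        exact hjb
      by_cases hlt : j % M % (6*7^k+6) < 6 * 7^k
      · rw [if_pos hlt] at hjb2
        obtain ⟨h1, h2⟩ := div_char _ _ _ h7k0 hjb2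
        omega
      · omega
    obtain ⟨q, hq⟩ : ∃ q, j % M % (6*7^k+6) = q := ⟨_, rfl⟩
    obtain ⟨qi, hqI⟩ : ∃ q, i % M % (6*7^k+6) = q := ⟨_, rfl⟩
    obtain ⟨P, hP⟩ : ∃ x, M * (N-k) = x := ⟨_, rfl⟩
    obtain ⟨Q, hQ⟩ : ∃ x, (6*7^k+6) * (i % M / (6*7^k+6)) = x := ⟨_, rfl⟩
    rw [hq] at hdj hqj hqjM
    rw [hqI] at hqi hdi hqM
    rw [hP, hQ] at hdj hdi
    rw [hP, hQ]
    omega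
  -- rewrite the sum
  have e1 : (∑ j ∈ Finset.range i, if pk M N k j = pk M N k i then (instI M N k).getD j 0 else 0)
      = ∑ j ∈ A, (instI M N k).getD j 0 := (Finset.sum_filter _ _).symm
  have e2 : ∑ j ∈ A, (instI M N k).getD j 0 = ∑ j ∈ A, (1:ℝ) / 7 ^ (N - j / M) := by
    refine Finset.sum_congr rfl fun j hj => ?_
    have hji : j < i := Finset.mem_range.mp (Finset.mem_filter.mp hj).1
    exact instI_getD M N k j (lt_trans hji hi)
  have e3 : ∑ j ∈ A, (1:ℝ) / 7 ^ (N - j / M)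
      = ∑ β ∈ Finset.range (N-k+1), ∑ j ∈ A.filter (fun j => j / M = β), (1:ℝ)/7^(N - j/M) := by
    refine (Finset.sum_fiberwise_of_maps_to ?_ _).symm
    intro j hj
    have hji : j < i := Finset.mem_range.mp (Finset.mem_filter.mp hj).1
    exact Finset.mem_range.mpr ((Nat.div_lt_iff_lt_mul hM).mpr (lt_trans hji hi))
  have e4 : ∀ β ∈ Finset.range (N-k+1),
      (∑ j ∈ A.filter (fun j => j / M = β), (1:ℝ)/7^(N - j/M))
      = ((A.filter (fun j => j / M = β)).card : ℝ) * (1/7^(N-β)) := by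
    intro β _
    rw [Finset.sum_congr rfl (fun j hj => by rw [(Finset.mem_filter.mp hj).2]),
      Finset.sum_const, nsmul_eq_mul]
  rw [e1, e2, e3, Finset.sum_congr rfl e4, Finset.sum_range_succ]
  have hNNk : N - (N - k) = k := by omega
  rw [hNNk]
  -- real abbreviations
  have hu0 : (0:ℝ) < 7^k := by positivity
  have hv0 : (0:ℝ) < 7^N := by positivity
  have hu7 : (7:ℝ) ≤ 7^k := by
    calc (7:ℝ) = 7^1 := (pow_one 7).symm
    _ ≤ 7^k := by
      apply pow_le_pow_right₀ (by norm_num) hk1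
  have huv : (7:ℝ)^k ≤ 7^N := by
    apply pow_le_pow_right₀ (by norm_num) hkN
  have hS := Ssig N k hkN
  have sumbound : ∀ C : ℕ, (∀ β, β < N-k → (A.filter (fun j => j / M = β)).card ≤ C) →
      (∑ β ∈ Finset.range (N-k), ((A.filter (fun j => j / M = β)).card : ℝ) * (1/7^(N-β)))
        ≤ (C:ℝ) * ((1/7^k - 1/7^N)/6) := by
    intro C hC
    calc (∑ β ∈ Finset.range (N-k), ((A.filter (fun j => j / M = β)).card : ℝ) * (1/7^(N-β)))
        ≤ ∑ β ∈ Finset.range (N-k), (C:ℝ) * (1/7^(N-β)) := by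
          apply Finset.sum_le_sum
          intro β hβ
          apply mul_le_mul_of_nonneg_right _ (by positivity)
          exact_mod_cast Nat.cast_le.mpr (hC β (Finset.mem_range.mp hβ))
    _ = (C:ℝ) * ∑ β ∈ Finset.range (N-k), (1:ℝ)/7^(N-β) := by rw [Finset.mul_sum]
    _ = (C:ℝ) * ((1/7^k - 1/7^N)/6) := by rw [hS]
  have hiKle : i / M < N - k + 1 := (Nat.div_lt_iff_lt_mul hM).mpr hi
  rcases lt_or_ge (i / M) (N - k) with hiK | hiK
  · -- i is a small item
    have h0 := bigEmpty hiK
    have hterm : ((A.filter (fun j => j / M = N - k)).card : ℝ) * (1/7^k) = 0 := by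
      rw [h0]; simp
    rw [hterm]
    have hsum := sumbound (6*7^k - 30) bsmallC
    have hcast : ((6*7^k - 30 : ℕ) : ℝ) = 6*(7:ℝ)^k - 30 := by
      have h30 : (30:ℕ) ≤ 6*7^k := by omega
      push_cast [Nat.cast_sub h30]
      ring
    rw [hcast] at hsum
    have h3 : (6*(7:ℝ)^k-30)*((1/7^k - 1/7^N)/6) ≤ (6*(7:ℝ)^k-30)*((1/7^k)/6) := by
      apply mul_le_mul_of_nonneg_left _ (by linarith)
      have : (0:ℝ) < 1/7^N := by positivity
      linarith
    have h4 : (6*(7:ℝ)^k-30)*((1/7^k)/6) = 1 - 5/7^k := by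
      field_simp
      ring
    have h5 : (0:ℝ) < 5/7^k := by positivity
    linarith
  · have hiKeq : i / M = N - k := by omega
    rcases lt_or_ge (binOf N k (i / M) (i % M % (6*7^k+6))) 6 with h6 | h6
    · -- last item of the bin is a big item, bins 0..5
      have hsum := sumbound 6 (bsmall6 h6)
      push_cast at hsum
      have hbig := big6 hiKeq h6
      have hbigR : ((A.filter (fun j => j / M = N - k)).card : ℝ) * (1/7^k)
          ≤ ((7:ℝ)^k - 1) * (1/7^k) := by
        apply mul_le_mul_of_nonneg_right _ (by positivity)
        have : ((A.filter (fun j => j / M = N - k)).card : ℝ) ≤ ((7^k - 1 : ℕ) : ℝ) :=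
          Nat.cast_le.mpr hbig
        have hcast : ((7^k - 1 : ℕ) : ℝ) = (7:ℝ)^k - 1 := by
          have h1 : (1:ℕ) ≤ 7^k := by omega
          push_cast [Nat.cast_sub h1]
          ring
        linarith
    -- combine
      have hA1 : ((7:ℝ)^k - 1) * (1/7^k) = 1 - 1/7^k := by field_simp
      have hA2 : (6:ℝ) * ((1/7^k - 1/7^N)/6) = 1/7^k - 1/7^N := by ring
      have hA3 : (0:ℝ) < 1/7^N := by positivity
      rw [hA1] at hbigR
      rw [hA2] at hsum
      linarith
    · have hbeq : binOf N k (i / M) (i % M % (6*7^k+6)) = 6 := by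
        have := binOf_lt_seven N k (i/M) (i % M % (6*7^k+6)); omega
      have hsum := sumbound (6*7^k - 30) bsmallC
      have hbig := bigC hiKeq hbeq
      have hbigR : ((A.filter (fun j => j / M = N - k)).card : ℝ) * (1/7^k)
          ≤ 5 * (1/7^k) := by
        apply mul_le_mul_of_nonneg_right _ (by positivity)
        exact_mod_cast Nat.cast_le.mpr hbig
      have hcast : ((6*7^k - 30 : ℕ) : ℝ) = 6*(7:ℝ)^k - 30 := by
        have h30 : (30:ℕ) ≤ 6*7^k := by omega
        push_cast [Nat.cast_sub h30]
        ring
      rw [hcast] at hsum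
      have hkey : (6*(7:ℝ)^k-30)*((1/7^k - 1/7^N)/6) + 5*(1/7^k)
          = 1 - ((7:ℝ)^k - 5)/7^N := by
        field_simp
        ring
      have hpos : (0:ℝ) < ((7:ℝ)^k - 5)/7^N := by
        apply div_pos _ hv0
        linarith
      linarith

lemma costle (M N k : ℕ) (hM : 0 < M) (hdvd : (6*7^k+6) ∣ M) :
    cost (instI M N k) (pk M N k) ≤ 7 * (M / (6*7^k+6)) := by
  unfold cost
  rw [instI_length]
  have hsub : (Finset.range ((N-k+1)*M)).image (pk M N k) ⊆ Finset.range (7 * (M / (6*7^k+6))) := by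
    intro t ht
    rw [Finset.mem_image] at ht
    obtain ⟨j, hj, rfl⟩ := ht
    rw [Finset.mem_range]
    have h1 : j % M < M := Nat.mod_lt _ hM
    have h2 : j % M / (6*7^k+6) < M / (6*7^k+6) := Nat.div_lt_div_of_lt_of_dvd hdvd h1
    have h3 : binOf N k (j / M) (j % M % (6*7^k+6)) < 7 := binOf_lt_seven _ _ _ _
    unfold pk
    obtain ⟨x, hx⟩ : ∃ x, j % M / (6*7^k+6) = x := ⟨_, rfl⟩
    obtain ⟨y, hy⟩ : ∃ y, M / (6*7^k+6) = y := ⟨_, rfl⟩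
    rw [hx, hy] at h2
    rw [hx, hy]
    omega
  calc ((Finset.range ((N-k+1)*M)).image (pk M N k)).card
      ≤ (Finset.range (7 * (M / (6*7^k+6)))).card := Finset.card_le_card hsub
  _ = 7 * (M / (6*7^k+6)) := Finset.card_range _

/-- `OPT(I_k) ≤ 7M/(6·(7^k+1))`. -/
theorem stmt15 (N M k : ℕ) (hN : 3 ≤ N) (hM : 3 ≤ M)
    (hdiv : Nat.factorial (7 ^ (N + 1)) ∣ M) (hk1 : 1 ≤ k) (hkN : k ≤ N) :
    (OPT (instI M N k) : ℝ) ≤ 7 * (M : ℝ) / (6 * (7 ^ k + 1)) := by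
  have hm0 : 0 < 6*7^k+6 := by positivity
  have hfacdvd : (6*7^k+6) ∣ Nat.factorial (7 ^ (N + 1)) := by
    apply Nat.dvd_factorial (by positivity)
    have h1 : 7^(k+1) ≤ 7^(N+1) := Nat.pow_le_pow_right (by norm_num) (by omega)
    have h2 : (7:ℕ)^(k+1) = 7 * 7^k := by ring
    have h3 : 7 ≤ 7^k := by
      calc (7:ℕ) = 7^1 := (pow_one 7).symm
      _ ≤ 7^k := Nat.pow_le_pow_right (by norm_num) hk1
    omega
  have hdvd : (6*7^k+6) ∣ M := hfacdvd.trans hdiv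
  have hM0 : 0 < M := by omega
  have h1 : OPT (instI M N k) ≤ 7 * (M / (6*7^k+6)) := by
    have hmem : cost (instI M N k) (pk M N k) ∈
        {m | ∃ p, Feasible (instI M N k) p ∧ cost (instI M N k) p = m} :=
      ⟨pk M N k, feas M N k hk1 hkN, rfl⟩
    exact le_trans (Nat.sInf_le hmem) (costle M N k hM0 hdvd)
  obtain ⟨c, hc⟩ := hdvd
  have h2 : ((7 * (M / (6*7^k+6)) : ℕ) : ℝ) = 7 * (M:ℝ) / (6 * ((7:ℝ)^k + 1)) := by
    rw [hc, Nat.mul_div_cancel_left c hm0]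
    push_cast
    have hne : (6:ℝ) * ((7:ℝ)^k + 1) ≠ 0 := by positivity
    field_simp
  calc (OPT (instI M N k) : ℝ) ≤ ((7 * (M / (6*7^k+6)) : ℕ) : ℝ) := Nat.cast_le.mpr h1
  _ = 7 * (M : ℝ) / (6 * (7 ^ k + 1)) := h2

end

end OOEBP
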